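/- arXiv:1810.07312 — 3 statements merged into one kernel-verified Lean document; each statement's English description precedes it below -/
import Mathlib

section
/- Let p < q be distinct odd primes, g a primitive root modulo p, and χ a nontrivial even Dirichlet character of conductor p. Then 2(χ(q)^{-1} - 1) + (χ(g^{-1}) - 1)(q - 1) ≠ 0. Similarly, if h is a primitive root modulo q and χ is a nontrivial even Dirichlet character of conductor q, then 2(χ(p)^{-1} - 1) + (χ(h^{-1}) - 1)(p - 1) ≠ 0. -/
/-!
Write `a = χ(m)⁻¹` and `b = χ(g)⁻¹`; both lie in the closed unit disc (a value of `χ` is a root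
of unity or `0`, and `0⁻¹ = 0`), and `b ≠ 1` because a character that is trivial on a generator
of `(ℤ/pℤ)ˣ` is trivial. The real part of `2 (a - 1) + (b - 1)(m - 1)` is a sum of two
non-positive terms, so it can only vanish if `Re b = 1`, which on the unit disc forces `b = 1`.
-/

open ComplexOrder in
lemma Complex.eq_one_of_re_eq_one_of_norm_le_one {b : ℂ} (hb : ‖b‖ ≤ 1) (hre : b.re = 1) :
    b = 1 := by
  have hnonneg : 0 ≤ b := Complex.re_eq_norm.mp (le_antisymm (Complex.re_le_norm b) (hre ▸ hb))
  rw [← Complex.re_add_im b, ← (Complex.nonneg_iff.mp hnonneg).2, hre]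
  simp

lemma Complex.mul_sub_one_add_sub_one_mul_ne_zero {a b : ℂ} (ha : ‖a‖ ≤ 1) (hb : ‖b‖ ≤ 1)
    (hb1 : b ≠ 1) {r c : ℝ} (hr : 0 ≤ r) (hc : 0 < c) :
    (r : ℂ) * (a - 1) + (b - 1) * c ≠ 0 := by
  intro h
  have hre : r * (a.re - 1) + (b.re - 1) * c = 0 := by
    simpa using congrArg Complex.re h
  have hare : a.re ≤ 1 := (Complex.re_le_norm a).trans ha
  have hbre : b.re ≤ 1 := (Complex.re_le_norm b).trans hb
  have hbre_eq : b.re = 1 := by nlinarith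
  exact hb1 (Complex.eq_one_of_re_eq_one_of_norm_le_one hb hbre_eq)

lemma DirichletCharacter.norm_inv_apply_le_one {F : Type*} [NormedField F] {n : ℕ}
    (χ : DirichletCharacter F n) (a : ZMod n) : ‖(χ a)⁻¹‖ ≤ 1 := by
  by_cases ha : IsUnit a
  · rw [norm_inv, ← ha.unit_spec, χ.unit_norm_eq_one, inv_one]
  · simp [χ.map_nonunit ha]

lemma ZMod.exists_unit_forall_mem_zpowers_of_orderOf_eq {p : ℕ} [Fact p.Prime] {g : ZMod p}
    (hg : orderOf g = p - 1) : ∃ u : (ZMod p)ˣ, (u : ZMod p) = g ∧ ∀ x, x ∈ Subgroup.zpowers u := by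
  have hfin : IsOfFinOrder g :=
    orderOf_pos_iff.mp (hg ▸ Nat.sub_pos_of_lt (Fact.out : p.Prime).one_lt)
  refine ⟨hfin.unit, rfl, fun x ↦ ?_⟩
  have htop : Subgroup.zpowers hfin.unit = ⊤ := by
    refine Subgroup.eq_top_of_card_eq _ ?_
    rw [Nat.card_zpowers, ← orderOf_units, IsOfFinOrder.val_unit, hg, Nat.card_eq_fintype_card,
      ZMod.card_units]
  exact htop ▸ Subgroup.mem_top x

lemma MulChar.apply_ne_one_of_orderOf_eq {R : Type*} [CommMonoidWithZero R] {p : ℕ} [Fact p.Prime]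
    {χ : MulChar (ZMod p) R} (hχ : χ ≠ 1) {g : ZMod p} (hg : orderOf g = p - 1) : χ g ≠ 1 := by
  obtain ⟨u, rfl, hu⟩ := ZMod.exists_unit_forall_mem_zpowers_of_orderOf_eq hg
  rwa [Ne, MulChar.eq_iff hu χ 1, MulChar.one_apply_coe] at hχ

lemma DirichletCharacter.two_mul_inv_sub_one_add_ne_zero {p : ℕ} (hp : p.Prime)
    {χ : DirichletCharacter ℂ p} (hχ : χ ≠ 1) {g : ℕ} (hg : orderOf (g : ZMod p) = p - 1)
    {m : ℕ} (hm : 2 ≤ m) :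
    2 * ((χ (m : ZMod p))⁻¹ - 1) + ((χ (g : ZMod p))⁻¹ - 1) * ((m : ℂ) - 1) ≠ 0 := by
  have : Fact p.Prime := ⟨hp⟩
  have hχg : (χ (g : ZMod p))⁻¹ ≠ 1 := inv_ne_one.mpr (MulChar.apply_ne_one_of_orderOf_eq hχ hg)
  have hm1 : (0 : ℝ) < m - 1 := by
    have : (2 : ℝ) ≤ m := by exact_mod_cast hm
    linarith
  exact_mod_cast Complex.mul_sub_one_add_sub_one_mul_ne_zero (χ.norm_inv_apply_le_one _)
    (χ.norm_inv_apply_le_one _) hχg zero_le_two hm1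

theorem stmt3_general (p q : ℕ) (hp : p.Prime) (hq : q.Prime) :
    (∀ (g : ℕ) (χ : DirichletCharacter ℂ p), orderOf (g : ZMod p) = p - 1 →
      χ ≠ 1 → χ.Even → χ.conductor = p →
      2 * ((χ (q : ZMod p))⁻¹ - 1) + ((χ (g : ZMod p))⁻¹ - 1) * ((q : ℂ) - 1) ≠ 0) ∧
    (∀ (h : ℕ) (χ : DirichletCharacter ℂ q), orderOf (h : ZMod q) = q - 1 →
      χ ≠ 1 → χ.Even → χ.conductor = q →
      2 * ((χ (p : ZMod q))⁻¹ - 1) + ((χ (h : ZMod q))⁻¹ - 1) * ((p : ℂ) - 1) ≠ 0) :=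
  ⟨fun _ _ hg hχ _ _ ↦ DirichletCharacter.two_mul_inv_sub_one_add_ne_zero hp hχ hg hq.two_le,
    fun _ _ hh hχ _ _ ↦ DirichletCharacter.two_mul_inv_sub_one_add_ne_zero hq hχ hh hp.two_le⟩

theorem stmt3 (p q : ℕ) (hp : p.Prime) (hq : q.Prime) (hpodd : Odd p) (hqodd : Odd q)
    (hpq : p < q) :
    (∀ (g : ℕ) (χ : DirichletCharacter ℂ p), orderOf (g : ZMod p) = p - 1 →
      χ ≠ 1 → χ.Even → χ.conductor = p →
      2 * ((χ (q : ZMod p))⁻¹ - 1) + ((χ (g : ZMod p))⁻¹ - 1) * ((q : ℂ) - 1) ≠ 0) ∧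
    (∀ (h : ℕ) (χ : DirichletCharacter ℂ q), orderOf (h : ZMod q) = q - 1 →
      χ ≠ 1 → χ.Even → χ.conductor = q →
      2 * ((χ (p : ZMod q))⁻¹ - 1) + ((χ (h : ZMod q))⁻¹ - 1) * ((p : ℂ) - 1) ≠ 0) :=
  stmt3_general p q hp hq
end

section
/- Let l be a prime, a ≥ 0 an integer, m a positive integer with gcd(m, l) = 1, and φ ∈ ℤ_l[x] a monic irreducible factor of x^m - 1 of degree f. Then the ring ℤ_l[x]/(φ(x^{l^a})) is a local ring with maximal ideal generated by l and φ(x), and its residue field is finite of order l^f. -/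
/-!
Write `ψ = φ(x^{l^a})` and `φ̄` for the reduction of `φ` modulo `l`. Since `m` is prime to `l`,
`φ̄` divides the separable polynomial `x^m - 1`, so it is squarefree. As `ℤ_l[x]/(φ)` is a domain
and finite over the complete ring `ℤ_l`, it is Henselian along `l`, so idempotents of
`𝔽_l[x]/(φ̄)` lift to it and are trivial; a squarefree polynomial with this property is
irreducible. Modulo `l` we have `ψ ≡ φ^{l^a}` (Frobenius), so `(l, φ)` is the kernel of the map
onto the field `𝔽_l[x]/(φ̄)`, of order `l^f`, and every maximal ideal of the finite
`ℤ_l`-algebra `ℤ_l[x]/(ψ)` contains `l`, hence `φ`.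
-/

open Polynomial IsLocalRing

theorem IsPrecomplete.of_finite {R M : Type*} [CommRing R] [AddCommGroup M] [Module R M]
    (I : Ideal R) [IsPrecomplete I R] [Module.Finite R M] : IsPrecomplete I M := by
  refine AdicCompletion.of_surjective_iff.mp fun y => ?_
  obtain ⟨t, rfl⟩ := AdicCompletion.ofTensorProduct_surjective_of_finite I M y
  induction t using TensorProduct.induction_on with
  | zero => exact ⟨0, by simp⟩
  | tmul r x =>
    obtain ⟨r, rfl⟩ := AdicCompletion.of_surjective I R r
    exact ⟨r • x, rfl⟩
  | add s t hs ht =>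
    obtain ⟨x, hx⟩ := hs
    obtain ⟨y, hy⟩ := ht
    exact ⟨x + y, by rw [map_add, hx, hy, map_add]⟩

theorem HenselianRing.exists_isIdempotentElem_mk_eq {S : Type*} [CommRing S] {J : Ideal S}
    [HenselianRing S J] {e : S ⧸ J} (he : IsIdempotentElem e) :
    ∃ e' : S, IsIdempotentElem e' ∧ Ideal.Quotient.mk J e' = e := by
  obtain ⟨e₀, rfl⟩ := Ideal.Quotient.mk_surjective e
  have hmon : (X ^ 2 - X : S[X]).Monic := monic_X_pow_sub (degree_X_le.trans_lt (by norm_num))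
  have hder : (derivative (X ^ 2 - X : S[X])).eval e₀ = 2 * e₀ - 1 := by
    simp only [derivative_sub, derivative_X_pow_succ, Nat.cast_one, map_add, map_one, pow_one,
      derivative_X, eval_sub, eval_mul, eval_add, eval_one, eval_X, sub_left_inj]
    ring
  -- `2 e - 1` is its own inverse modulo `J`
  have hunit : IsUnit (Ideal.Quotient.mk J (2 * e₀ - 1)) := by
    refine .of_mul_eq_one (Ideal.Quotient.mk J (2 * e₀ - 1)) ?_
    have : Ideal.Quotient.mk J e₀ * Ideal.Quotient.mk J e₀ = Ideal.Quotient.mk J e₀ := he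
    simp only [map_sub, map_mul, map_ofNat, map_one]
    linear_combination 4 * this
  obtain ⟨e', hroot, hsub⟩ := HenselianRing.is_henselian (I := J) (X ^ 2 - X) hmon e₀
    (by rw [← Ideal.Quotient.eq_zero_iff_mem]; simp [sq, he.eq]) (hder ▸ hunit)
  refine ⟨e', ?_, ?_⟩
  · simpa [IsIdempotentElem, sq, sub_eq_zero] using hroot
  · rwa [Ideal.Quotient.mk_eq_mk_iff_sub_mem]

theorem irreducible_of_squarefree_of_isIdempotentElem {R : Type*} [CommRing R] [IsDomain R]
    [IsBezout R] {g : R} (hsf : Squarefree g) (hg : ¬IsUnit g)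
    (hidem : ∀ e : R ⧸ Ideal.span {g}, IsIdempotentElem e → e = 0 ∨ e = 1) : Irreducible g := by
  refine ⟨hg, fun a b hab => ?_⟩
  subst hab
  obtain ⟨u, v, huv⟩ := (IsRelPrime.of_squarefree_mul hsf).isCoprime
  have hmk : ∀ x y : R, Ideal.Quotient.mk (Ideal.span {a * b}) x = Ideal.Quotient.mk _ y ↔
      a * b ∣ x - y := fun x y => by
    rw [Ideal.Quotient.mk_eq_mk_iff_sub_mem, Ideal.mem_span_singleton]
  -- `u * a` is `0` modulo `a` and `1` modulo `b`
  have hidem' : IsIdempotentElem (Ideal.Quotient.mk (Ideal.span {a * b}) (u * a)) := by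
    rw [IsIdempotentElem, ← map_mul, hmk]
    exact ⟨-(u * v), by linear_combination (u * a) * huv⟩
  rcases hidem _ hidem' with h | h
  · rw [← map_zero (Ideal.Quotient.mk _), hmk, sub_zero, mul_comm u] at h
    have hbu : b ∣ u := (mul_dvd_mul_iff_left (left_ne_zero_of_mul hsf.ne_zero)).mp h
    exact Or.inr (isUnit_of_dvd_one (huv ▸ (hbu.mul_right a).add (dvd_mul_left b v)))
  · rw [← map_one (Ideal.Quotient.mk _), hmk, show u * a - 1 = -(v * b) by linear_combination huv,
      dvd_neg] at h
    have hav : a ∣ v := (mul_dvd_mul_iff_right (right_ne_zero_of_mul hsf.ne_zero)).mp h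
    exact Or.inl (isUnit_of_dvd_one (huv ▸ (dvd_mul_left a u).add (hav.mul_right b)))

theorem Polynomial.Monic.irreducible_map_residue {R : Type*} [CommRing R] [IsLocalRing R]
    [IsNoetherianRing R] [IsAdicComplete (maximalIdeal R) R] {φ : R[X]} (hmon : φ.Monic)
    (hprime : Prime φ) (hsf : Squarefree (φ.map (residue R))) :
    Irreducible (φ.map (residue R)) := by
  have := AdjoinRoot.isDomain_of_prime hprime
  have : Module.Finite R (AdjoinRoot φ) := (AdjoinRoot.powerBasis' hmon).finite
  have : IsAdicComplete (maximalIdeal R) (AdjoinRoot φ) := { IsPrecomplete.of_finite _ with }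
  set J := (maximalIdeal R).map (algebraMap R (AdjoinRoot φ))
  have : IsAdicComplete J (AdjoinRoot φ) :=
    { IsHausdorff.map_algebraMap_iff.mpr inferInstance,
      IsPrecomplete.map_algebraMap_iff.mpr inferInstance with }
  have hunit : ¬IsUnit (φ.map (residue R)) := by
    rw [(hmon.map _).isUnit_iff, ← (hmon.map _).natDegree_eq_zero, hmon.natDegree_map,
      hmon.natDegree_eq_zero]
    rintro rfl
    exact hprime.not_isUnit isUnit_one
  refine irreducible_of_squarefree_of_isIdempotentElem hsf hunit fun e he => ?_
  let E : (AdjoinRoot φ ⧸ J) ≃+* (ResidueField R)[X] ⧸ Ideal.span {φ.map (residue R)} :=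
    (AdjoinRoot.quotEquivQuotMap φ (maximalIdeal R)).toRingEquiv
  obtain ⟨e', he', hmk⟩ := HenselianRing.exists_isIdempotentElem_mk_eq (J := J) (he.map E.symm)
  rw [← E.apply_symm_apply e, ← hmk]
  rcases IsIdempotentElem.iff_eq_zero_or_one.mp he' with rfl | rfl
  · exact Or.inl (by simp)
  · exact Or.inr (by simp)

theorem IsLocalRing.of_isMaximal_le_radical_map {A R : Type*} [CommRing A] [IsLocalRing A]
    [CommRing R] [Algebra A R] [Algebra.IsIntegral A R] {M : Ideal R} (hM : M.IsMaximal)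
    (hle : M ≤ ((maximalIdeal A).map (algebraMap A R)).radical) : IsLocalRing R := by
  refine .of_unique_max_ideal ⟨M, hM, fun J hJ => (hM.eq_of_le hJ.ne_top ?_).symm⟩
  have hJA : maximalIdeal A ≤ J.comap (algebraMap A R) :=
    (eq_maximalIdeal (Ideal.isMaximal_comap_of_isIntegral_of_isMaximal J)).ge
  exact hle.trans (hJ.isPrime.radical_le_iff.mpr (Ideal.map_le_iff_le_comap.mpr hJA))

theorem AdjoinRoot.ker_mk_map_comp_mapRingHom {A B : Type*} [CommRing A] [CommRing B]
    {π : A →+* B} (hπ : Function.Surjective π) (φ : A[X]) :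
    RingHom.ker ((mk (φ.map π)).comp (mapRingHom π)) = (RingHom.ker π).map C ⊔ Ideal.span {φ} := by
  have : Ideal.span {φ.map π} = (Ideal.span {φ}).map (mapRingHom π) := by
    rw [Ideal.map_span, Set.image_singleton, coe_mapRingHom]
  rw [← RingHom.comap_ker, show RingHom.ker (mk (φ.map π)) = _ from Ideal.mk_ker, this,
    Ideal.comap_map_of_surjective _ (map_surjective π hπ), sup_comm, ← ker_mapRingHom]
  rfl

theorem AdjoinRoot.natCard_eq_pow_natDegree {K : Type*} [Field K] {g : K[X]} (hg : g ≠ 0) :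
    Nat.card (AdjoinRoot g) = Nat.card K ^ g.natDegree := by
  have : Module.Finite K (AdjoinRoot g) := (powerBasis hg).finite
  rw [Module.natCard_eq_pow_finrank (K := K), (powerBasis hg).finrank]
  rfl

namespace PadicInt

variable {l : ℕ} [Fact l.Prime]

theorem ker_mapRingHom_toZMod :
    RingHom.ker (mapRingHom (toZMod : ℤ_[l] →+* ZMod l)) = Ideal.span {C (l : ℤ_[l])} := by
  rw [ker_mapRingHom, ker_toZMod, maximalIdeal_eq_span_p, Ideal.map_span, Set.image_singleton]

theorem C_dvd_comp_X_pow_sub_pow (φ : ℤ_[l][X]) (a : ℕ) :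
    C (l : ℤ_[l]) ∣ φ.comp (X ^ l ^ a) - φ ^ l ^ a := by
  rw [← Ideal.mem_span_singleton, ← ker_mapRingHom_toZMod, RingHom.mem_ker, map_sub, map_pow,
    coe_mapRingHom, map_comp, Polynomial.map_pow, map_X, ← expand_eq_comp_X_pow, sub_eq_zero]
  simpa [Subsingleton.elim (iterateFrobenius (ZMod l) l a) (RingHom.id _)] using
    map_iterateFrobenius_expand l (φ.map toZMod) a

theorem irreducible_map_toZMod_of_dvd_X_pow_sub_one {φ : ℤ_[l][X]} (hmon : φ.Monic)
    (hirr : Irreducible φ) {m : ℕ} (hm : m.Coprime l) (hdvd : φ ∣ X ^ m - 1) :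
    Irreducible (φ.map toZMod) := by
  have hm' : (m : ResidueField ℤ_[l]) ≠ 0 := by
    rw [← _root_.map_ne_zero residueField, map_natCast, Ne, ZMod.natCast_eq_zero_iff]
    exact (Nat.Prime.coprime_iff_not_dvd Fact.out).mp hm.symm
  have hsf : Squarefree (φ.map (residue ℤ_[l])) :=
    (X_pow_sub_one_separable_iff.mpr hm').squarefree.squarefree_of_dvd
      (by simpa using Polynomial.map_dvd (residue ℤ_[l]) hdvd)
  rw [toZMod_eq_residueField_comp_residue, ← map_map]
  exact (hmon.irreducible_map_residue hirr.prime hsf).map (mapEquiv residueField)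

section CompXPow

variable (φ : ℤ_[l][X]) (a : ℕ)

theorem ker_adjoinRootMk_comp_mapRingHom_toZMod :
    RingHom.ker ((AdjoinRoot.mk (φ.map toZMod)).comp (mapRingHom toZMod)) =
      Ideal.span {C (l : ℤ_[l]), φ} := by
  rw [AdjoinRoot.ker_mk_map_comp_mapRingHom (ZMod.ringHom_surjective _), ← ker_mapRingHom,
    ker_mapRingHom_toZMod, Ideal.span_insert]

theorem comp_X_pow_mem_span_pair : φ.comp (X ^ l ^ a) ∈ Ideal.span {C (l : ℤ_[l]), φ} := by
  obtain ⟨k, hk⟩ := C_dvd_comp_X_pow_sub_pow φ a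
  have hpow : φ ^ (l ^ a - 1) * φ = φ ^ l ^ a := by
    rw [← pow_succ, Nat.sub_add_cancel (Nat.one_le_pow _ _ (Fact.out : l.Prime).pos)]
  exact Ideal.mem_span_pair.mpr ⟨k, φ ^ (l ^ a - 1), by linear_combination hpow - hk⟩

noncomputable def quotientCompXPowReduction :
    ℤ_[l][X] ⧸ Ideal.span {φ.comp (X ^ l ^ a)} →+* AdjoinRoot (φ.map toZMod) :=
  Ideal.Quotient.lift _ ((AdjoinRoot.mk _).comp (mapRingHom toZMod)) fun _ hg =>
    (Ideal.span_singleton_le_iff_mem _).mpr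
      (ker_adjoinRootMk_comp_mapRingHom_toZMod φ ▸ comp_X_pow_mem_span_pair φ a) hg

theorem quotientCompXPowReduction_surjective :
    Function.Surjective (quotientCompXPowReduction φ a) :=
  Ideal.Quotient.lift_surjective_of_surjective _ _
    (AdjoinRoot.mk_surjective.comp (map_surjective _ (ZMod.ringHom_surjective _)))

theorem ker_quotientCompXPowReduction :
    RingHom.ker (quotientCompXPowReduction φ a) =
      Ideal.span {Ideal.Quotient.mk _ (C (l : ℤ_[l])), Ideal.Quotient.mk _ φ} := by
  rw [quotientCompXPowReduction, Ideal.ker_quotient_lift,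
    ker_adjoinRootMk_comp_mapRingHom_toZMod, Ideal.map_span, Set.image_pair]

theorem span_pair_le_radical_map_maximalIdeal :
    Ideal.span {Ideal.Quotient.mk (Ideal.span {φ.comp (X ^ l ^ a)}) (C (l : ℤ_[l])),
      Ideal.Quotient.mk _ φ} ≤
      ((maximalIdeal ℤ_[l]).map (algebraMap ℤ_[l] (ℤ_[l][X] ⧸ _))).radical := by
  set I := Ideal.span {φ.comp (X ^ l ^ a)}
  have hl : Ideal.Quotient.mk I (C (l : ℤ_[l])) ∈ (maximalIdeal ℤ_[l]).map (algebraMap _ _) :=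
    Ideal.mem_map_of_mem _ (by rw [maximalIdeal_eq_span_p]; exact Ideal.mem_span_singleton_self _)
  obtain ⟨k, hk⟩ := C_dvd_comp_X_pow_sub_pow φ a
  have hφ : Ideal.Quotient.mk I φ ^ l ^ a ∈ (maximalIdeal ℤ_[l]).map (algebraMap _ _) := by
    have h0 : Ideal.Quotient.mk I (φ.comp (X ^ l ^ a)) = 0 :=
      Ideal.Quotient.eq_zero_iff_mem.mpr (Ideal.mem_span_singleton_self _)
    rw [← map_pow,
      show φ ^ l ^ a = φ.comp (X ^ l ^ a) - C (l : ℤ_[l]) * k by linear_combination -hk,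
      map_sub, h0, zero_sub, map_mul, Ideal.neg_mem_iff]
    exact Ideal.mul_mem_right _ _ hl
  rw [Ideal.span_le, Set.insert_subset_iff, Set.singleton_subset_iff]
  exact ⟨Ideal.le_radical hl, l ^ a, hφ⟩

theorem finite_quotient_comp_X_pow {φ : ℤ_[l][X]} (hmon : φ.Monic) :
    Module.Finite ℤ_[l] (ℤ_[l][X] ⧸ Ideal.span {φ.comp (X ^ l ^ a)}) :=
  (AdjoinRoot.powerBasis' (hmon.comp (monic_X_pow _) (by
    rw [natDegree_X_pow]; exact (pow_pos (Fact.out : l.Prime).pos a).ne'))).finite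

end CompXPow

end PadicInt

theorem stmt14_general (l : ℕ) [Fact l.Prime] (a m f : ℕ) (hm : Nat.Coprime m l)
    (φ : Polynomial ℤ_[l]) (hmon : φ.Monic) (hirr : Irreducible φ)
    (hdvd : φ ∣ X ^ m - 1) (hf : φ.natDegree = f) :
    ∃ hloc : IsLocalRing (Polynomial ℤ_[l] ⧸ Ideal.span {φ.comp (X ^ l ^ a)}),
      (@IsLocalRing.maximalIdeal _ _ hloc =
        Ideal.span {Ideal.Quotient.mk (Ideal.span {φ.comp (X ^ l ^ a)}) (C (l : ℤ_[l])),
          Ideal.Quotient.mk (Ideal.span {φ.comp (X ^ l ^ a)}) φ}) ∧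
      Nat.card (@IsLocalRing.ResidueField _ _ hloc) = l ^ f := by
  have := Fact.mk (PadicInt.irreducible_map_toZMod_of_dvd_X_pow_sub_one hmon hirr hm hdvd)
  have := PadicInt.finite_quotient_comp_X_pow a hmon
  have hM := PadicInt.ker_quotientCompXPowReduction φ a ▸
    RingHom.ker_isMaximal_of_surjective _ (PadicInt.quotientCompXPowReduction_surjective φ a)
  have hloc := IsLocalRing.of_isMaximal_le_radical_map hM
    (PadicInt.span_pair_le_radical_map_maximalIdeal φ a)
  have hmax := (IsLocalRing.eq_maximalIdeal hM).symm
  refine ⟨hloc, hmax, ?_⟩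
  let e : ResidueField (ℤ_[l][X] ⧸ Ideal.span {φ.comp (X ^ l ^ a)}) ≃+*
      AdjoinRoot (φ.map PadicInt.toZMod) :=
    (Ideal.quotEquivOfEq (hmax.trans (PadicInt.ker_quotientCompXPowReduction φ a).symm)).trans
      (RingHom.quotientKerEquivOfSurjective (PadicInt.quotientCompXPowReduction_surjective φ a))
  rw [Nat.card_congr e.toEquiv, AdjoinRoot.natCard_eq_pow_natDegree (hmon.map _).ne_zero,
    Nat.card_zmod, hmon.natDegree_map, hf]

open Polynomial in
theorem stmt14 (l : ℕ) [Fact l.Prime] (a m f : ℕ) (hmpos : 0 < m) (hm : Nat.Coprime m l)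
    (φ : Polynomial ℤ_[l]) (hmon : φ.Monic) (hirr : Irreducible φ)
    (hdvd : φ ∣ X ^ m - 1) (hf : φ.natDegree = f) :
    ∃ hloc : IsLocalRing (Polynomial ℤ_[l] ⧸ Ideal.span {φ.comp (X ^ l ^ a)}),
      (@IsLocalRing.maximalIdeal _ _ hloc =
        Ideal.span {Ideal.Quotient.mk (Ideal.span {φ.comp (X ^ l ^ a)}) (C (l : ℤ_[l])),
          Ideal.Quotient.mk (Ideal.span {φ.comp (X ^ l ^ a)}) φ}) ∧
      Nat.card (@IsLocalRing.ResidueField _ _ hloc) = l ^ f :=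
  stmt14_general l a m f hm φ hmon hirr hdvd hf
end

section
/- Let p < q be distinct odd primes, let l be an odd prime and M a power of l, let L be a subfield of ℚ(ζ_{pq})⁺, and let ε be a unit of the ring of integers of L. Fix the real embedding of ℚ(ζ_{pq})⁺ and consider the polynomial P(X) = ∏_{a ∈ Gal(L/ℚ)} (X - (a(ε))^{1/M}), where (a(ε))^{1/M} denotes the real M-th root of the real number a(ε). If P(X) has coefficients in ℤ, then ε is an M-th power in ℚ(ζ_{pq})⁺. -/
open scoped NumberField IntermediateField

noncomputable def zetaC (n : ℕ) : ℂ := Complex.exp (2 * (Real.pi : ℂ) * Complex.I / n)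

noncomputable def Kplus (n : ℕ) : IntermediateField ℚ ℂ := ℚ⟮zetaC n + (zetaC n)⁻¹⟯

instance Kplus.instNumberField (n : ℕ) : NumberField (Kplus n) := by
  have hint : IsIntegral ℚ (zetaC n + (zetaC n)⁻¹) := by
    rcases eq_or_ne n 0 with rfl | hn
    · have h1 : zetaC 0 = 1 := by simp [zetaC]
      rw [h1]
      norm_num
      have h2 := isIntegral_algebraMap (R := ℚ) (A := ℂ) (x := 2)
      simpa using h2
    · have hζ : IsPrimitiveRoot (zetaC n) n := Complex.isPrimitiveRoot_exp n hn
      have h1 : IsIntegral ℚ (zetaC n) :=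
        (hζ.isIntegral (Nat.pos_of_ne_zero hn)).tower_top
      have h2 : IsIntegral ℚ (zetaC n)⁻¹ :=
        ((hζ.inv).isIntegral (Nat.pos_of_ne_zero hn)).tower_top
      exact h1.add h2
  have : FiniteDimensional ℚ ↥(ℚ⟮zetaC n + (zetaC n)⁻¹⟯) :=
    IntermediateField.adjoin.finiteDimensional hint
  have : FiniteDimensional ℚ (Kplus n) := this
  exact { }

/-!
Let `α` be the real `M`-th root of `ε`. The integer polynomial `P` vanishes at `α`, so every
conjugate of `α` over `L` in `ℂ` is a root of `P`, hence real, and also an `M`-th root of `ε`.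
Since `M` is odd, `ε` has only one real `M`-th root, so `α` has a single conjugate over `L`;
as `L` is perfect, this forces `α ∈ L ⊆ ℚ(ζ_{pq})⁺`.
-/

open Polynomial

theorem mem_range_of_forall_aeval_minpoly_eq {F E : Type*} [Field F] [PerfectField F] [Field E]
    [IsAlgClosed E] [Algebra F E] {x : E} (hx : IsIntegral F x)
    (h : ∀ y : E, aeval y (minpoly F x) = 0 → y = x) : x ∈ (algebraMap F E).range := by
  classical
  rw [← minpoly.natDegree_eq_one_iff]
  have hcard := card_rootSet_eq_natDegree (K := E)
    (PerfectField.separable_of_irreducible (minpoly.irreducible hx)) (IsAlgClosed.splits _)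
  have hsub : (minpoly F x).rootSet E ⊆ {x} := fun y hy => h y (mem_rootSet'.mp hy).2
  have hle : Fintype.card ((minpoly F x).rootSet E) ≤ 1 := by
    simpa using Set.card_le_card hsub
  have := minpoly.natDegree_pos hx
  omega

theorem ofReal_mem_range_of_odd_pow_eq {F : Type*} [Field F] [CharZero F] [Algebra F ℂ] {n : ℕ}
    (hn : Odd n) {c : F} {x : ℝ} (hxc : (x : ℂ) ^ n = algebraMap F ℂ c) {p : F[X]}
    (hpx : aeval (x : ℂ) p = 0) (hp : ∀ y : ℂ, aeval y p = 0 → ∃ t : ℝ, y = t) :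
    (x : ℂ) ∈ (algebraMap F ℂ).range := by
  have hxc' : aeval (x : ℂ) (X ^ n - C c) = 0 := by simp [hxc]
  have hint : IsIntegral F (x : ℂ) := ⟨_, monic_X_pow_sub_C c hn.pos.ne', hxc'⟩
  refine mem_range_of_forall_aeval_minpoly_eq hint fun y hy => ?_
  obtain ⟨t, rfl⟩ := hp y (aeval_eq_zero_of_dvd_aeval_eq_zero (minpoly.dvd F _ hpx) hy)
  have htc : aeval (t : ℂ) (X ^ n - C c) = 0 :=
    aeval_eq_zero_of_dvd_aeval_eq_zero (minpoly.dvd F _ hxc') hy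
  rw [map_sub, map_pow, aeval_X, aeval_C, sub_eq_zero, ← hxc] at htc
  exact_mod_cast hn.pow_inj.mp (by exact_mod_cast htc)

open Polynomial in
theorem stmt16_general (p q l M : ℕ) (hlodd : Odd l) (hMl : ∃ k : ℕ, M = l ^ k)
    (L : IntermediateField ℚ ℂ) (hL : L ≤ Kplus (p * q)) [FiniteDimensional ℚ L]
    (ε : (𝓞 L)ˣ) (r : (L ≃ₐ[ℚ] L) → ℝ)
    (hr : ∀ a : L ≃ₐ[ℚ] L,
      ((r a : ℂ)) ^ M = ((a ((ε : 𝓞 L) : L) : L) : ℂ))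
    (hP : ∀ i : ℕ, ∃ z : ℤ,
      (∏ a : L ≃ₐ[ℚ] L, ((X : Polynomial ℝ) - C (r a))).coeff i = (z : ℝ)) :
    ∃ β : Kplus (p * q), (β : ℂ) ^ M = (((ε : 𝓞 L) : L) : ℂ) := by
  obtain ⟨k, rfl⟩ := hMl
  obtain ⟨P, hPmap⟩ : ∃ P : ℤ[X], P.map (algebraMap ℤ ℝ) = ∏ a : L ≃ₐ[ℚ] L, (X - C (r a)) :=
    (lifts_iff_coeff_lifts _).mpr fun i => (hP i).imp fun z hz => hz.symm
  have heval : ∀ y : ℂ, aeval y (P.map (algebraMap ℤ L)) = ∏ a, (y - r a) := by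
    intro y
    rw [aeval_map_algebraMap, ← aeval_map_algebraMap ℝ, hPmap]
    simp only [map_prod, map_sub, aeval_X, aeval_C, Complex.coe_algebraMap]
  have hr1 : (r 1 : ℂ) ^ l ^ k = algebraMap L ℂ ((ε : 𝓞 L) : L) := hr 1
  obtain ⟨β, hβ⟩ := ofReal_mem_range_of_odd_pow_eq hlodd.pow hr1
    (by rw [heval]; exact Finset.prod_eq_zero (Finset.mem_univ 1) (sub_self _))
    fun y hy => by
      obtain ⟨a, -, ha⟩ := Finset.prod_eq_zero_iff.mp ((heval y).symm.trans hy)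
      exact ⟨r a, sub_eq_zero.mp ha⟩
  exact ⟨⟨β, hL β.2⟩, by simpa [← hβ] using hr1⟩

open Polynomial in
set_option synthInstance.maxHeartbeats 1000000 in
set_option maxHeartbeats 1000000 in
theorem stmt16 (p q l M : ℕ) (hp : p.Prime) (hq : q.Prime) (hpodd : Odd p) (hqodd : Odd q)
    (hpq : p < q) (hl : l.Prime) (hlodd : Odd l) (hMl : ∃ k : ℕ, M = l ^ k)
    (L : IntermediateField ℚ ℂ) (hL : L ≤ Kplus (p * q)) [FiniteDimensional ℚ L]
    (ε : (𝓞 L)ˣ) (r : (L ≃ₐ[ℚ] L) → ℝ)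
    (hr : ∀ a : L ≃ₐ[ℚ] L,
      ((r a : ℂ)) ^ M = ((a ((ε : 𝓞 L) : L) : L) : ℂ))
    (hP : ∀ i : ℕ, ∃ z : ℤ,
      (∏ a : L ≃ₐ[ℚ] L, ((X : Polynomial ℝ) - C (r a))).coeff i = (z : ℝ)) :
    ∃ β : Kplus (p * q), (β : ℂ) ^ M = (((ε : 𝓞 L) : L) : ℂ) :=
  stmt16_general p q l M hlodd hMl L hL ε r hr hP
end
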